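/- For the 2M-level symmetric quantizer f, the correlation between the quantized output and the input satisfies E[f(x+z)·x] = E_s·√(2/(π(E_s+σ²)))·( Σ_{i=1}^{M−1} r_i·(exp(−α_{i−1}²/(2(E_s+σ²))) − exp(−α_i²/(2(E_s+σ²)))) + r_M·exp(−α_{M−1}²/(2(E_s+σ²))) ). -/

import Mathlib

/-
Write `y = x + z ~ N(0, E_s + σ²)`. The pair `(x, y)` is jointly Gaussian and
`x - (E_s / (E_s + σ²)) y` is uncorrelated with `y`, hence independent of it, so
`E[f(y) x] = E_s / (E_s + σ²) · E[f(y) y]` (Bussgang's theorem). On the other hand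
`f(y) y = |y| q(|y|)`, where the level function `q` is a combination of the indicators of the
half-lines `[α_i, ∞)`; this reduces `E[f(y) y]` to the Gaussian tail moments
`E[|y|; |y| ≥ a] = √(2v/π) exp(-a² / (2v))`, computed from `(-v φ)' = t φ` for the
density `φ`.
-/

open MeasureTheory ProbabilityTheory Real Set
open scoped NNReal

theorem Real.measurable_sign : Measurable Real.sign :=
  Measurable.ite measurableSet_Iio measurable_const
    (Measurable.ite measurableSet_Ioi measurable_const measurable_const)

theorem Real.sign_mul_self (r : ℝ) : Real.sign r * r = |r| := by
  rcases lt_trichotomy r 0 with h | rfl | h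
  · rw [Real.sign_of_neg h, abs_of_neg h, neg_one_mul]
  · simp
  · rw [Real.sign_of_pos h, abs_of_pos h, one_mul]

theorem Real.abs_sign_le_one (r : ℝ) : |Real.sign r| ≤ 1 := by
  rcases Real.sign_apply_eq r with h | h | h <;> simp [h]

namespace ProbabilityTheory

lemma hasDerivAt_gaussianPDFReal (μ : ℝ) {v : ℝ≥0} (hv : v ≠ 0) (x : ℝ) :
    HasDerivAt (gaussianPDFReal μ v) (-((x - μ) / v) * gaussianPDFReal μ v x) x := by
  have h := ((((hasDerivAt_id' x).sub_const μ).pow 2).fun_neg.div_const (2 * (v : ℝ))).exp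
    |>.const_mul (√(2 * π * v))⁻¹
  refine h.congr_deriv ?_
  simp only [gaussianPDFReal, Pi.pow_apply]
  field_simp [NNReal.coe_ne_zero.mpr hv]
  ring

lemma integrable_mul_gaussianPDFReal_zero {v : ℝ≥0} (hv : v ≠ 0) :
    Integrable fun t ↦ t * gaussianPDFReal 0 v t := by
  have hb : 0 < (2 * (v : ℝ))⁻¹ := by positivity
  refine ((integrable_mul_exp_neg_mul_sq hb).const_mul (√(2 * π * v))⁻¹).congr
    (ae_of_all _ fun t ↦ ?_)
  simp only [gaussianPDFReal, sub_zero]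
  ring_nf

lemma integral_Ioi_mul_gaussianPDFReal {v : ℝ≥0} (hv : v ≠ 0) (a : ℝ) :
    ∫ t in Ioi a, t * gaussianPDFReal 0 v t = v * gaussianPDFReal 0 v a := by
  have hderiv : ∀ t, HasDerivAt (fun t ↦ -(v * gaussianPDFReal 0 v t))
      (t * gaussianPDFReal 0 v t) t := fun t ↦ by
    refine ((hasDerivAt_gaussianPDFReal 0 hv t).const_mul (v : ℝ)).fun_neg.congr_deriv ?_
    field_simp [NNReal.coe_ne_zero.mpr hv]
    ring
  have hint := (integrable_mul_gaussianPDFReal_zero hv).integrableOn (s := Ioi a)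
  have hlim := tendsto_zero_of_hasDerivAt_of_integrableOn_Ioi (fun t _ ↦ hderiv t) hint
    ((integrable_gaussianPDFReal 0 v).const_mul (v : ℝ)).neg.integrableOn
  rw [integral_Ioi_of_hasDerivAt_of_tendsto' (fun t _ ↦ hderiv t) hint hlim]
  ring

lemma integral_abs_mul_indicator_gaussianReal {v : ℝ≥0} (hv : v ≠ 0) {a : ℝ}
    (ha : 0 ≤ a) :
    ∫ u, |u| * (Ici a).indicator 1 |u| ∂gaussianReal 0 v
      = √(2 * v / π) * exp (-a ^ 2 / (2 * v)) := by
  set F : ℝ → ℝ := fun t ↦ t * gaussianPDFReal 0 v t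
  have heven : ∀ u, gaussianPDFReal 0 v u * (|u| * (Ici a).indicator 1 |u|)
      = (Ici a).indicator F |u| := by
    intro u
    by_cases h : |u| ∈ Ici a
    · simp [h, F, gaussianPDFReal, sq_abs, mul_comm]
    · simp [h]
  have hIoi : (Ici a).indicator F =ᵐ[volume] (Ioi a).indicator F :=
    indicator_ae_eq_of_ae_eq_set Ioi_ae_eq_Ici.symm
  rw [integral_gaussianReal_eq_integral_smul hv]
  simp_rw [smul_eq_mul, heven]
  rw [integral_comp_abs (f := (Ici a).indicator F), integral_congr_ae (ae_restrict_of_ae hIoi),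
    setIntegral_indicator measurableSet_Ioi, inter_eq_right.mpr (Ioi_subset_Ioi ha),
    integral_Ioi_mul_gaussianPDFReal hv, gaussianPDFReal, sub_zero, ← mul_assoc, ← mul_assoc]
  congr 1
  have hsq : 2 * (v : ℝ) / π = (2 * v / √(2 * π * v)) ^ 2 := by
    rw [div_pow, sq_sqrt (by positivity)]
    field_simp
  rw [hsq, sqrt_sq (by positivity)]
  ring

/-- Bussgang's theorem. -/
theorem HasGaussianLaw.integral_comp_mul_eq_covariance_div_variance_mul
    {Ω : Type*} [MeasurableSpace Ω] {P : Measure Ω} [IsProbabilityMeasure P] {X Y : Ω → ℝ}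
    (hXY : HasGaussianLaw (fun ω ↦ (X ω, Y ω)) P)
    (hX : P[X] = 0) (hY : P[Y] = 0) (hVar : Var[Y; P] ≠ 0)
    {g : ℝ → ℝ} (hg : Measurable g) (hg_bdd : ∃ C, ∀ y, |g y| ≤ C) :
    ∫ ω, g (Y ω) * X ω ∂P = cov[X, Y; P] / Var[Y; P] * ∫ ω, g (Y ω) * Y ω ∂P := by
  set c := cov[X, Y; P] / Var[Y; P]
  set W := fun ω ↦ X ω - c * Y ω
  obtain ⟨C, hC⟩ := hg_bdd
  have hX2 : MemLp X 2 P := hXY.fst.memLp_two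
  have hY2 : MemLp Y 2 P := hXY.snd.memLp_two
  have hYm : AEMeasurable Y P := hY2.aestronglyMeasurable.aemeasurable
  have hgY : AEStronglyMeasurable (fun ω ↦ g (Y ω)) P :=
    (hg.comp_aemeasurable hYm).aestronglyMeasurable
  have hgY_bdd : ∀ᵐ ω ∂P, ‖g (Y ω)‖ ≤ C := ae_of_all _ fun ω ↦ hC (Y ω)
  have hW2 : MemLp W 2 P := hX2.sub (hY2.const_mul c)
  have hWY : HasGaussianLaw (fun ω ↦ (W ω, Y ω)) P := by
    simpa [W] using hXY.map_fun
      ((ContinuousLinearMap.fst ℝ ℝ ℝ - c • ContinuousLinearMap.snd ℝ ℝ ℝ).prod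
        (ContinuousLinearMap.snd ℝ ℝ ℝ))
  have hcov : cov[W, Y; P] = 0 := by
    rw [covariance_fun_sub_left hX2 (hY2.const_mul c) hY2, covariance_const_mul_left,
      covariance_self hYm, div_mul_cancel₀ _ hVar, sub_self]
  have hindep : IndepFun (fun ω ↦ g (Y ω)) W P :=
    (hWY.indepFun_of_covariance_eq_zero hcov).symm.comp hg measurable_id
  have hW_mean : P[W] = 0 := by
    simp only [W]
    rw [integral_sub (hX2.integrable one_le_two) ((hY2.integrable one_le_two).const_mul c),
      integral_const_mul, hX, hY]
    simp
  calc ∫ ω, g (Y ω) * X ω ∂P = ∫ ω, g (Y ω) * W ω + c * (g (Y ω) * Y ω) ∂P := by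
        congr 1; ext ω; simp only [W]; ring
    _ = c * ∫ ω, g (Y ω) * Y ω ∂P := by
        rw [integral_add (hW2.integrable one_le_two |>.bdd_mul hgY hgY_bdd)
          ((hY2.integrable one_le_two |>.bdd_mul hgY hgY_bdd).const_mul c), integral_const_mul,
          hindep.integral_fun_mul_eq_mul_integral hgY hW2.aestronglyMeasurable, hW_mean]
        simp

lemma map_add_prod_gaussianReal (v₁ v₂ : ℝ≥0) :
    ((gaussianReal 0 v₁).prod (gaussianReal 0 v₂)).map (fun p : ℝ × ℝ ↦ p.1 + p.2)
      = gaussianReal 0 (v₁ + v₂) := by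
  have h := gaussianReal_conv_gaussianReal (m₁ := 0) (m₂ := 0) (v₁ := v₁) (v₂ := v₂)
  rw [zero_add] at h
  rw [← h]
  rfl

lemma variance_fst_prod_gaussianReal (v₁ v₂ : ℝ≥0) :
    Var[fun p : ℝ × ℝ ↦ p.1; (gaussianReal 0 v₁).prod (gaussianReal 0 v₂)] = v₁ := by
  have := variance_map (X := fun x : ℝ ↦ x) aemeasurable_id
    (measurable_fst.aemeasurable (μ := (gaussianReal 0 v₁).prod (gaussianReal 0 v₂)))
  rw [measurePreserving_fst.map_eq, variance_fun_id_gaussianReal] at this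
  exact this.symm

theorem integral_comp_add_mul_fst_prod_gaussianReal {v₁ v₂ : ℝ≥0} (hv : v₁ + v₂ ≠ 0)
    {g : ℝ → ℝ} (hg : Measurable g) (hg_bdd : ∃ C, ∀ y, |g y| ≤ C) :
    ∫ p : ℝ × ℝ, g (p.1 + p.2) * p.1 ∂(gaussianReal 0 v₁).prod (gaussianReal 0 v₂)
      = v₁ / (v₁ + v₂) * ∫ u, g u * u ∂gaussianReal 0 (v₁ + v₂) := by
  set P := (gaussianReal 0 v₁).prod (gaussianReal 0 v₂)
  have hlaw := map_add_prod_gaussianReal v₁ v₂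
  have hsum : ∀ {h : ℝ → ℝ}, AEStronglyMeasurable h (gaussianReal 0 (v₁ + v₂)) →
      ∫ p, h (p.1 + p.2) ∂P = ∫ u, h u ∂gaussianReal 0 (v₁ + v₂) := fun hh ↦ by
    rw [← hlaw, integral_map (by fun_prop) (hlaw ▸ hh)]
  have hfst : MemLp (fun p : ℝ × ℝ ↦ p.1) 2 P := (memLp_id_gaussianReal 2).comp_fst _
  have hsnd : MemLp (fun p : ℝ × ℝ ↦ p.2) 2 P := (memLp_id_gaussianReal 2).comp_snd _
  have hvar : Var[fun p : ℝ × ℝ ↦ p.1 + p.2; P] = (v₁ + v₂ : ℝ≥0) := by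
    rw [← variance_fun_id_gaussianReal (μ := 0) (v := v₁ + v₂), ← hlaw,
      variance_map (X := fun x : ℝ ↦ x) aemeasurable_id (by fun_prop)]
    rfl
  have hcov : cov[fun p : ℝ × ℝ ↦ p.1, fun p ↦ p.1 + p.2; P] = v₁ := by
    rw [show (fun p : ℝ × ℝ ↦ p.1 + p.2) = (fun p ↦ p.1) + fun p ↦ p.2 from rfl,
      covariance_add_right hfst hfst hsnd, covariance_self (by fun_prop),
      variance_fst_prod_gaussianReal,
      covariance_fst_snd_prod (X := fun x : ℝ ↦ x) (Y := fun x : ℝ ↦ x)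
        (memLp_id_gaussianReal 2) (memLp_id_gaussianReal 2), add_zero]
  have hjoint : HasGaussianLaw (fun p : ℝ × ℝ ↦ (p.1, p.1 + p.2)) P := by
    simpa using IsGaussian.hasGaussianLaw_id.map_fun ((ContinuousLinearMap.fst ℝ ℝ ℝ).prod
      (ContinuousLinearMap.fst ℝ ℝ ℝ + ContinuousLinearMap.snd ℝ ℝ ℝ))
  rw [hjoint.integral_comp_mul_eq_covariance_div_variance_mul ?_ ?_ ?_ hg hg_bdd, hcov, hvar,
    NNReal.coe_add, hsum (h := fun u ↦ g u * u) (by fun_prop)]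
  · rw [integral_fun_fst (f := fun x : ℝ ↦ x)]; simp
  · simpa using hsum (h := id) (by fun_prop)
  · rw [hvar]; exact NNReal.coe_ne_zero.mpr hv

end ProbabilityTheory

-- The level function of the quantizer, written with indicators of half-lines `[α i, ∞)` so that
-- its Gaussian moments become combinations of tail moments.
noncomputable def staircase (α r : ℕ → ℝ) (N : ℕ) (rTop t : ℝ) : ℝ :=
  ∑ i ∈ Finset.Icc 1 N, r i * ((Ici (α (i - 1))).indicator 1 t - (Ici (α i)).indicator 1 t)
    + rTop * (Ici (α N)).indicator 1 t

section staircase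

variable {α r : ℕ → ℝ} {N : ℕ} {rTop t : ℝ}

lemma staircase_of_le (hα : MonotoneOn α (Iic N)) (ht : α N ≤ t) :
    staircase α r N rTop t = rTop := by
  have hmem : ∀ i ≤ N, t ∈ Ici (α i) := fun i hi ↦
    (hα hi (mem_Iic.mpr le_rfl) hi).trans ht
  rw [staircase, Finset.sum_eq_zero fun i hi ↦ ?_, indicator_of_mem (hmem N le_rfl)]
  · simp
  · have hiN := (Finset.mem_Icc.mp hi).2
    rw [indicator_of_mem (hmem _ (by omega)), indicator_of_mem (hmem _ hiN), sub_self, mul_zero]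

lemma staircase_of_mem_Ico (hα : MonotoneOn α (Iic N)) {k : ℕ} (hk : k ∈ Finset.Icc 1 N)
    (ht : t ∈ Ico (α (k - 1)) (α k)) : staircase α r N rTop t = r k := by
  obtain ⟨hk1, hkN⟩ := Finset.mem_Icc.mp hk
  have hlt : ∀ i ≤ N, k ≤ i → t ∉ Ici (α i) := fun i hiN hki ↦
    not_le.mpr (ht.2.trans_le (hα (by simpa using hkN) (by simpa using hiN) hki))
  have hle : ∀ i ≤ k - 1, t ∈ Ici (α i) := fun i hi ↦
    (hα (by simp; omega) (by simp; omega) hi).trans ht.1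
  rw [staircase, Finset.sum_eq_single k, indicator_of_mem (hle _ le_rfl),
    indicator_of_notMem (hlt k hkN le_rfl), indicator_of_notMem (hlt N le_rfl hkN)]
  · simp
  · intro i hi hik
    obtain ⟨hi1, hiN⟩ := Finset.mem_Icc.mp hi
    rcases lt_or_gt_of_ne hik with h | h
    · rw [indicator_of_mem (hle _ (by omega)), indicator_of_mem (hle _ (by omega)), sub_self,
        mul_zero]
    · rw [indicator_of_notMem (hlt _ (by omega) (by omega)),
        indicator_of_notMem (hlt _ hiN h.le), sub_self, mul_zero]
  · exact fun h ↦ absurd hk h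

lemma exists_mem_Ico_of_lt (h0 : α 0 ≤ t) (ht : t < α N) :
    ∃ k ∈ Finset.Icc 1 N, t ∈ Ico (α (k - 1)) (α k) := by
  have hex : ∃ k, t < α k := ⟨N, ht⟩
  have hk0 : Nat.find hex ≠ 0 := fun h ↦ (Nat.find_spec hex).not_ge (h ▸ h0)
  refine ⟨Nat.find hex, Finset.mem_Icc.mpr ⟨Nat.one_le_iff_ne_zero.mpr hk0, Nat.find_le ht⟩,
    not_lt.mp (Nat.find_min hex (by omega)), Nat.find_spec hex⟩

lemma measurable_staircase : Measurable (staircase α r N rTop) := by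
  unfold staircase
  fun_prop (disch := measurability)

lemma abs_staircase_le :
    |staircase α r N rTop t| ≤ ∑ i ∈ Finset.Icc 1 N, |r i| + |rTop| := by
  have hind : ∀ s : Set ℝ, s.indicator (1 : ℝ → ℝ) t ∈ Icc 0 1 := fun s ↦ by
    by_cases h : t ∈ s <;> simp [h]
  have hdiff : ∀ a b, |(Ici a).indicator (1 : ℝ → ℝ) t - (Ici b).indicator 1 t| ≤ 1 :=
    fun a b ↦ abs_sub_le_iff.mpr ⟨by linarith [(hind (Ici a)).2, (hind (Ici b)).1],
      by linarith [(hind (Ici a)).1, (hind (Ici b)).2]⟩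
  refine (abs_add_le _ _).trans (add_le_add ((Finset.abs_sum_le_sum_abs _ _).trans
    (Finset.sum_le_sum fun i _ ↦ ?_)) ?_)
  · rw [abs_mul]; exact mul_le_of_le_one_right (abs_nonneg _) (hdiff _ _)
  · rw [abs_mul, abs_of_nonneg (hind _).1]
    exact mul_le_of_le_one_right (abs_nonneg _) (hind _).2

lemma eq_staircase_abs_mul_sign {f : ℝ → ℝ} (hα0 : α 0 = 0) (hα : MonotoneOn α (Iic N))
    (hf_mid : ∀ i : ℕ, 1 ≤ i → i ≤ N → ∀ y : ℝ,
      α (i - 1) ≤ |y| → |y| < α i → f y = r i * Real.sign y)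
    (hf_top : ∀ y : ℝ, α N ≤ |y| → f y = rTop * Real.sign y) (y : ℝ) :
    f y = staircase α r N rTop |y| * Real.sign y := by
  by_cases htop : α N ≤ |y|
  · rw [hf_top y htop, staircase_of_le hα htop]
  · obtain ⟨k, hk, hyk⟩ := exists_mem_Ico_of_lt (hα0 ▸ abs_nonneg y) (not_le.mp htop)
    obtain ⟨hk1, hkN⟩ := Finset.mem_Icc.mp hk
    rw [hf_mid k hk1 hkN y hyk.1 hyk.2, staircase_of_mem_Ico hα hk hyk]

lemma integral_abs_mul_staircase_gaussianReal {v : ℝ≥0} (hv : v ≠ 0)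
    (hα : ∀ i ≤ N, 0 ≤ α i) :
    ∫ u, |u| * staircase α r N rTop |u| ∂gaussianReal 0 v
      = √(2 * v / π) * (∑ i ∈ Finset.Icc 1 N,
          r i * (exp (-α (i - 1) ^ 2 / (2 * v)) - exp (-α i ^ 2 / (2 * v)))
        + rTop * exp (-α N ^ 2 / (2 * v))) := by
  set T : ℝ → ℝ → ℝ := fun a u ↦ |u| * (Ici a).indicator 1 |u|
  have hT : ∀ a, Integrable (T a) (gaussianReal 0 v) := fun a ↦ by
    refine ((memLp_id_gaussianReal 1).integrable le_rfl).abs.mul_bdd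
      ((measurable_one.indicator measurableSet_Ici).comp measurable_abs).aestronglyMeasurable
      (ae_of_all _ fun u ↦ ?_) (c := 1)
    by_cases h : |u| ∈ Ici a <;> simp [h]
  have hpt : ∀ u, |u| * staircase α r N rTop |u|
      = ∑ i ∈ Finset.Icc 1 N, r i * (T (α (i - 1)) u - T (α i) u) + rTop * T (α N) u := by
    intro u
    simp only [staircase, T, mul_add, Finset.mul_sum, mul_sub, mul_left_comm]
  have hTi : ∀ i ∈ Finset.Icc 1 N, Integrable (fun u ↦ r i * (T (α (i - 1)) u - T (α i) u))
      (gaussianReal 0 v) := fun i _ ↦ ((hT _).sub (hT _)).const_mul _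
  rw [integral_congr_ae (ae_of_all _ hpt), integral_add (integrable_finsetSum _ hTi)
    ((hT _).const_mul _), integral_finsetSum _ hTi, integral_const_mul, mul_add,
    Finset.mul_sum]
  congr 1
  · refine Finset.sum_congr rfl fun i hi ↦ ?_
    have hi' := (Finset.mem_Icc.mp hi).2
    rw [integral_const_mul, integral_sub (hT _) (hT _),
      integral_abs_mul_indicator_gaussianReal hv (hα _ (by omega)),
      integral_abs_mul_indicator_gaussianReal hv (hα _ hi')]
    ring
  · rw [integral_abs_mul_indicator_gaussianReal hv (hα _ le_rfl)]
    ring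

end staircase

theorem stmt_9_general (Es σ2 : NNReal) (hEs : 0 < Es)
    (μ : Measure (ℝ × ℝ)) (hμ : μ = (gaussianReal 0 Es).prod (gaussianReal 0 σ2))
    (M : ℕ) (α : ℕ → ℝ) (r : ℕ → ℝ)
    (hα0 : α 0 = 0) (hαmono : ∀ i : ℕ, i + 1 ≤ M - 1 → α i < α (i + 1))
    (f : ℝ → ℝ)
    (hf_mid : ∀ i : ℕ, 1 ≤ i → i ≤ M - 1 → ∀ y : ℝ,
      α (i - 1) ≤ |y| → |y| < α i → f y = r i * Real.sign y)
    (hf_top : ∀ y : ℝ, α (M - 1) ≤ |y| → f y = r M * Real.sign y) :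
    ∫ p : ℝ × ℝ, f (p.1 + p.2) * p.1 ∂μ
      = (Es : ℝ) * Real.sqrt (2 / (Real.pi * ((Es : ℝ) + (σ2 : ℝ)))) *
        ((∑ i ∈ Finset.Icc 1 (M - 1), r i *
            (Real.exp (-(α (i - 1)) ^ 2 / (2 * ((Es : ℝ) + (σ2 : ℝ))))
              - Real.exp (-(α i) ^ 2 / (2 * ((Es : ℝ) + (σ2 : ℝ))))))
          + r M * Real.exp (-(α (M - 1)) ^ 2 / (2 * ((Es : ℝ) + (σ2 : ℝ))))) := by
  have hv : Es + σ2 ≠ 0 := (add_pos_of_pos_of_nonneg hEs zero_le).ne'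
  have hα : MonotoneOn α (Iic (M - 1)) :=
    (strictMonoOn_of_lt_add_one ordConnected_Iic fun i _ _ hi ↦ hαmono i hi).monotoneOn
  have hα_nonneg : ∀ i ≤ M - 1, 0 ≤ α i := fun i hi ↦
    hα0 ▸ hα (mem_Iic.mpr (Nat.zero_le _)) hi (Nat.zero_le i)
  obtain rfl : f = fun y ↦ staircase α r (M - 1) (r M) |y| * Real.sign y :=
    funext (eq_staircase_abs_mul_sign hα0 hα hf_mid hf_top)
  have hg_bdd : ∃ C, ∀ y, |staircase α r (M - 1) (r M) |y| * Real.sign y| ≤ C :=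
    ⟨_, fun y ↦ (abs_mul _ _).trans_le <|
      (mul_le_of_le_one_right (abs_nonneg _) (Real.abs_sign_le_one y)).trans abs_staircase_le⟩
  rw [hμ, integral_comp_add_mul_fst_prod_gaussianReal
    (g := fun y ↦ staircase α r (M - 1) (r M) |y| * Real.sign y) hv
    ((measurable_staircase.comp measurable_abs).mul Real.measurable_sign) hg_bdd]
  simp_rw [mul_assoc, Real.sign_mul_self, mul_comm _ |_|]
  rw [integral_abs_mul_staircase_gaussianReal hv hα_nonneg, NNReal.coe_add]
  have hs : (0 : ℝ) < Es + σ2 := by positivity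
  have hsplit : 2 * ((Es : ℝ) + σ2) / π = (Es + σ2) ^ 2 * (2 / (π * (Es + σ2))) := by
    field_simp
  rw [hsplit, sqrt_mul (sq_nonneg _), sqrt_sq hs.le]
  field_simp

theorem stmt_9 (Es σ2 : NNReal) (hEs : 0 < Es) (hσ2 : 0 < σ2)
    (μ : Measure (ℝ × ℝ)) (hμ : μ = (gaussianReal 0 Es).prod (gaussianReal 0 σ2))
    (M : ℕ) (hM : 1 ≤ M) (α : ℕ → ℝ) (r : ℕ → ℝ)
    (hα0 : α 0 = 0) (hαmono : ∀ i : ℕ, i + 1 ≤ M - 1 → α i < α (i + 1))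
    (f : ℝ → ℝ)
    (hf_mid : ∀ i : ℕ, 1 ≤ i → i ≤ M - 1 → ∀ y : ℝ,
      α (i - 1) ≤ |y| → |y| < α i → f y = r i * Real.sign y)
    (hf_top : ∀ y : ℝ, α (M - 1) ≤ |y| → f y = r M * Real.sign y) :
    ∫ p : ℝ × ℝ, f (p.1 + p.2) * p.1 ∂μ
      = (Es : ℝ) * Real.sqrt (2 / (Real.pi * ((Es : ℝ) + (σ2 : ℝ)))) *
        ((∑ i ∈ Finset.Icc 1 (M - 1), r i *
            (Real.exp (-(α (i - 1)) ^ 2 / (2 * ((Es : ℝ) + (σ2 : ℝ))))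
              - Real.exp (-(α i) ^ 2 / (2 * ((Es : ℝ) + (σ2 : ℝ))))))
          + r M * Real.exp (-(α (M - 1)) ^ 2 / (2 * ((Es : ℝ) + (σ2 : ℝ))))) :=
  stmt_9_general Es σ2 hEs μ hμ M α r hα0 hαmono f hf_mid hf_top
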